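/- arXiv:math/0206081 — 7 statements merged into one kernel-verified Lean document; each statement's English description precedes it below -/
import Mathlib

section
/- Let p, q be natural numbers and u₀, u₁, u₂ ∈ H̃ satisfy |u₀|² + |u₁|² + |u₂|² = 1 and q·ū₀ j u₀ + p·ū₁ j u₁ + p·ū₂ j u₂ = 0. Then for every t ∈ ℝ: q·ū₀ j e^{jqt} u₀ + p·ū₁ j e^{jpt} u₁ + p·ū₂ j e^{jpt} u₂ = |u₀|²·(q·sinh(qt) − p·sinh(pt)) + p·sinh(pt) + q·(cosh(qt) − cosh(pt))·(ū₀ j u₀), where the real summands are understood via the embedding ℝ → H̃. -/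
open Quaternion

noncomputable section

/-- The square norm `|q|² = q q̄` of a para-quaternion `q ∈ H̃ = ℍ[ℝ, -1, 1]`. -/
def pnormSq (q : ℍ[ℝ, -1, 1]) : ℝ := (q * star q).re

/-- The imaginary unit `j` of the para-quaternions `H̃ = ℍ[ℝ, -1, 1]` (with `j² = 1`). -/
def jq : ℍ[ℝ, -1, 1] := ⟨0, 0, 1, 0⟩

/-- `e^{jt} = cosh t + (sinh t)·j` as a para-quaternion. -/
def pexp (t : ℝ) : ℍ[ℝ, -1, 1] := ⟨Real.cosh t, 0, Real.sinh t, 0⟩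

/-! Since `e^{js} = cosh s + (sinh s) j` and `j² = 1`, each summand splits as
`ū j e^{js} u = cosh s · ū j u + sinh s · |u|²`. The identity is then the combination
`cosh(pt) · hK + p sinh(pt) · hnorm` of the two hypotheses, computed in the real vector space `H̃`. -/

namespace ParaQuaternion

theorem jq_mul_self : jq * jq = 1 := by
  ext <;> simp [jq]

theorem pexp_eq (t : ℝ) : pexp t = Real.cosh t • (1 : ℍ[ℝ, -1, 1]) + Real.sinh t • jq := by
  ext <;> simp [pexp, jq]

theorem star_mul_self_eq_pnormSq (u : ℍ[ℝ, -1, 1]) : star u * u = (pnormSq u : ℍ[ℝ, -1, 1]) := by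
  rw [pnormSq, ← QuaternionAlgebra.mul_star_eq_coe, star_comm_self']

theorem star_mul_jq_mul_pexp_mul (u : ℍ[ℝ, -1, 1]) (s : ℝ) :
    star u * jq * pexp s * u
      = Real.cosh s • (star u * jq * u) + (Real.sinh s * pnormSq u) • (1 : ℍ[ℝ, -1, 1]) := by
  have hjj : star u * jq * jq * u = pnormSq u • (1 : ℍ[ℝ, -1, 1]) := by
    rw [mul_assoc (star u), jq_mul_self, mul_one, star_mul_self_eq_pnormSq,
      ← QuaternionAlgebra.coe_mul_eq_smul, mul_one]
  rw [pexp_eq, mul_add, add_mul, mul_smul_comm, mul_one, smul_mul_assoc, mul_smul_comm,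
    smul_mul_assoc, hjj, smul_smul]

end ParaQuaternion

open ParaQuaternion in
/-- The key identity in the proof that the ℝ-action `φ_t` acts freely on `K₀`:
if `|u₀|² + |u₁|² + |u₂|² = 1` and `q ū₀ j u₀ + p ū₁ j u₁ + p ū₂ j u₂ = 0`, then
`q ū₀ j e^{jqt} u₀ + p ū₁ j e^{jpt} u₁ + p ū₂ j e^{jpt} u₂
  = |u₀|² (q sinh qt − p sinh pt) + p sinh pt + q (cosh qt − cosh pt) ū₀ j u₀`. -/
theorem key_free_action_identity (p q : ℕ) (u₀ u₁ u₂ : ℍ[ℝ, -1, 1])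
    (hnorm : pnormSq u₀ + pnormSq u₁ + pnormSq u₂ = 1)
    (hK : (q : ℍ[ℝ, -1, 1]) * (star u₀ * jq * u₀) + (p : ℍ[ℝ, -1, 1]) * (star u₁ * jq * u₁)
        + (p : ℍ[ℝ, -1, 1]) * (star u₂ * jq * u₂) = 0)
    (t : ℝ) :
    (q : ℍ[ℝ, -1, 1]) * (star u₀ * jq * pexp ((q : ℝ) * t) * u₀)
      + (p : ℍ[ℝ, -1, 1]) * (star u₁ * jq * pexp ((p : ℝ) * t) * u₁)
      + (p : ℍ[ℝ, -1, 1]) * (star u₂ * jq * pexp ((p : ℝ) * t) * u₂)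
    = ((pnormSq u₀ * ((q : ℝ) * Real.sinh ((q : ℝ) * t) - (p : ℝ) * Real.sinh ((p : ℝ) * t))
          + (p : ℝ) * Real.sinh ((p : ℝ) * t) : ℝ) : ℍ[ℝ, -1, 1])
      + (((q : ℝ) * (Real.cosh ((q : ℝ) * t) - Real.cosh ((p : ℝ) * t)) : ℝ) : ℍ[ℝ, -1, 1])
          * (star u₀ * jq * u₀) := by
  simp only [star_mul_jq_mul_pexp_mul, ← QuaternionAlgebra.coe_natCast,
    QuaternionAlgebra.coe_mul_eq_smul] at hK ⊢
  rw [← mul_one ((_ : ℝ) : ℍ[ℝ, -1, 1]), QuaternionAlgebra.coe_mul_eq_smul]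
  linear_combination (norm := module) Real.cosh ((p : ℝ) * t) • hK
    + hnorm • (((p : ℝ) * Real.sinh ((p : ℝ) * t)) • (1 : ℍ[ℝ, -1, 1]))
end
end

section
/- (Freeness of the action, Lemma 3.1.) Let p, q be coprime natural numbers with p ≠ q, p, q ≥ 1, and let u₀, u₁, u₂ ∈ H̃ satisfy |u₀|² + |u₁|² + |u₂|² = 1 and q·ū₀ j u₀ + p·ū₁ j u₁ + p·ū₂ j u₂ = 0. If t ∈ ℝ and h ∈ H̃ with |h|² = 1 satisfy e^{jqt}u₀ = u₀·h, e^{jpt}u₁ = u₁·h, and e^{jpt}u₂ = u₂·h, then t = 0. -/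
/-!
Multiplying `e^{jc} u = u h` on the left by `ū` gives `sinh c · ū j u = |u|² (h − cosh c)`.
Substituting these three identities into the equation of `K₀` shows that `h` is real, unless the
weights `|u₀|²` and `|u₁|² + |u₂|²` both vanish, which the pseudo-sphere forbids (`p ≠ q` makes
`cosh qt ≠ cosh pt`). A real `h` with `|h|² = 1` is `±1`, and that is impossible too: `ū j u` has
zero real part, so `|u|² (Re h − cosh c) = 0`, and `cosh c > 1` for `c ≠ 0` forces all `|uᵢ|² = 0`.
-/

open Quaternion

noncomputable section

open Real

theorem exists_eq_smul_of_smul_sub_add_smul_sub_eq_zero {K M : Type*} [Field K] [AddCommGroup M]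
    [Module K M] {e h : M} (he : e ≠ 0) {α β a b : K} (hab : a ≠ b) (hαβ : α ≠ 0 ∨ β ≠ 0)
    (H : α • (h - a • e) + β • (h - b • e) = 0) : ∃ c : K, h = c • e := by
  have H' : (α + β) • h = (α * a + β * b) • e := by
    linear_combination (norm := module) H
  by_cases hsum : α + β = 0
  · obtain rfl : β = -α := by linear_combination hsum
    have hαe : (α * (a - b)) • e = 0 := by linear_combination (norm := module) -H'
    have hα : α = 0 := by simpa [he, sub_eq_zero, hab] using hαe
    simp [hα] at hαβ
  · exact ⟨(α * a + β * b) / (α + β), by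
      rw [div_eq_inv_mul, mul_smul, ← H', smul_smul, inv_mul_cancel₀ hsum, one_smul]⟩

theorem star_mul_self_eq_pnormSq_smul_one (u : ℍ[ℝ, -1, 1]) : star u * u = pnormSq u • 1 := by
  ext <;> simp [pnormSq] <;> ring

theorem pnormSq_smul_one (c : ℝ) : pnormSq (c • 1) = c ^ 2 := by
  simp [pnormSq, sq]

theorem re_star_mul_jq_mul (u : ℍ[ℝ, -1, 1]) : (star u * jq * u).re = 0 := by
  simp [jq]; ring

theorem pexp_mul (c : ℝ) (u : ℍ[ℝ, -1, 1]) : pexp c * u = cosh c • u + sinh c • (jq * u) := by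
  ext <;> simp [pexp, jq] <;> ring

theorem sinh_smul_star_mul_jq_mul {c : ℝ} {u v : ℍ[ℝ, -1, 1]} (huv : pexp c * u = u * v) :
    sinh c • (star u * jq * u) = pnormSq u • (v - cosh c • 1) := by
  have h := congrArg (star u * ·) huv
  simp only [pexp_mul, mul_add, mul_smul_comm, ← mul_assoc, star_mul_self_eq_pnormSq_smul_one,
    smul_mul_assoc, one_mul] at h
  linear_combination (norm := module) h

theorem pnormSq_mul_re_sub_cosh_eq_zero {c : ℝ} {u v : ℍ[ℝ, -1, 1]} (huv : pexp c * u = u * v) :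
    pnormSq u * (v.re - cosh c) = 0 := by
  have h := congrArg QuaternionAlgebra.re (sinh_smul_star_mul_jq_mul huv)
  rw [QuaternionAlgebra.re_smul, re_star_mul_jq_mul, QuaternionAlgebra.re_smul] at h
  simpa using h.symm

theorem pnormSq_eq_zero_of_pexp_mul_eq_mul {c : ℝ} {u v : ℍ[ℝ, -1, 1]} (huv : pexp c * u = u * v)
    (hc : c ≠ 0) (hv : |v.re| ≤ 1) : pnormSq u = 0 := by
  have hcosh : v.re - cosh c ≠ 0 := by
    have := one_lt_cosh.2 hc
    have := (abs_le.1 hv).2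
    linarith
  simpa [hcosh] using pnormSq_mul_re_sub_cosh_eq_zero huv

theorem cosh_mul_ne_cosh_mul {m n t : ℝ} (hmn : |m| ≠ |n|) (ht : t ≠ 0) :
    cosh (m * t) ≠ cosh (n * t) := by
  intro h
  have habs := le_antisymm (cosh_le_cosh.1 h.le) (cosh_le_cosh.1 h.ge)
  rw [abs_mul, abs_mul] at habs
  exact hmn (mul_right_cancel₀ (abs_ne_zero.2 ht) habs)

theorem action_free_general (p q : ℕ) (hne : p ≠ q)
    (hp : 1 ≤ p) (hq : 1 ≤ q)
    (u₀ u₁ u₂ : ℍ[ℝ, -1, 1])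
    (hnorm : pnormSq u₀ + pnormSq u₁ + pnormSq u₂ = 1)
    (hK : (q : ℍ[ℝ, -1, 1]) * (star u₀ * jq * u₀) + (p : ℍ[ℝ, -1, 1]) * (star u₁ * jq * u₁)
        + (p : ℍ[ℝ, -1, 1]) * (star u₂ * jq * u₂) = 0)
    (t : ℝ) (h : ℍ[ℝ, -1, 1]) (hh : pnormSq h = 1)
    (h₀ : pexp ((q : ℝ) * t) * u₀ = u₀ * h)
    (h₁ : pexp ((p : ℝ) * t) * u₁ = u₁ * h)
    (h₂ : pexp ((p : ℝ) * t) * u₂ = u₂ * h) :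
    t = 0 := by
  by_contra ht
  have hp₀ : p ≠ 0 := by omega
  have hq₀ : q ≠ 0 := by omega
  have hqt : (q : ℝ) * t ≠ 0 := mul_ne_zero (by simpa using hq₀) ht
  have hpt : (p : ℝ) * t ≠ 0 := mul_ne_zero (by simpa using hp₀) ht
  have hs := sinh_ne_zero.2 hqt
  have hr := sinh_ne_zero.2 hpt
  simp only [← nsmul_eq_mul, ← Nat.cast_smul_eq_nsmul ℝ] at hK
  obtain ⟨c, rfl⟩ : ∃ c : ℝ, h = c • 1 := by
    refine exists_eq_smul_of_smul_sub_add_smul_sub_eq_zero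
      (α := q * sinh (p * t) * pnormSq u₀) (β := p * sinh (q * t) * (pnormSq u₁ + pnormSq u₂))
      one_ne_zero (cosh_mul_ne_cosh_mul (m := q) (n := p) (by simpa using hne.symm) ht) ?_ ?_
    · by_contra! hzero
      simp only [mul_eq_zero, Nat.cast_eq_zero, hq₀, hr, or_self, false_or, hp₀, hs] at hzero
      linarith
    -- `sinh qt · sinh pt` times the `K₀` equation, with each `sinh · ū j u` eliminated
    · linear_combination (norm := module) (-(q : ℝ) * sinh (p * t)) • sinh_smul_star_mul_jq_mul h₀
        - ((p : ℝ) * sinh (q * t)) • (sinh_smul_star_mul_jq_mul h₁ + sinh_smul_star_mul_jq_mul h₂)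
        + (sinh (q * t) * sinh (p * t)) • hK
  have hc : |(c • (1 : ℍ[ℝ, -1, 1])).re| ≤ 1 := by
    simpa [pnormSq_smul_one, ← sq_le_one_iff_abs_le_one] using hh.le
  rw [pnormSq_eq_zero_of_pexp_mul_eq_mul h₀ hqt hc, pnormSq_eq_zero_of_pexp_mul_eq_mul h₁ hpt hc,
    pnormSq_eq_zero_of_pexp_mul_eq_mul h₂ hpt hc] at hnorm
  norm_num at hnorm

/-- Freeness of the action (Lemma 3.1): if `p ≠ q` are coprime positive naturals,
`(u₀,u₁,u₂)` lies on the pseudo-sphere and satisfies the defining equation of `K₀`,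
and `φ_t(u) = u·h` for some unit para-quaternion `h`, then `t = 0`. -/
theorem action_free (p q : ℕ) (hpq : Nat.Coprime p q) (hne : p ≠ q)
    (hp : 1 ≤ p) (hq : 1 ≤ q)
    (u₀ u₁ u₂ : ℍ[ℝ, -1, 1])
    (hnorm : pnormSq u₀ + pnormSq u₁ + pnormSq u₂ = 1)
    (hK : (q : ℍ[ℝ, -1, 1]) * (star u₀ * jq * u₀) + (p : ℍ[ℝ, -1, 1]) * (star u₁ * jq * u₁)
        + (p : ℍ[ℝ, -1, 1]) * (star u₂ * jq * u₂) = 0)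
    (t : ℝ) (h : ℍ[ℝ, -1, 1]) (hh : pnormSq h = 1)
    (h₀ : pexp ((q : ℝ) * t) * u₀ = u₀ * h)
    (h₁ : pexp ((p : ℝ) * t) * u₁ = u₁ * h)
    (h₂ : pexp ((p : ℝ) * t) * u₂ = u₂ * h) :
    t = 0 :=
  action_free_general p q hne hp hq u₀ u₁ u₂ hnorm hK t h hh h₀ h₁ h₂
end
end

section
/- Let n, a, b, c, C be real numbers with n ≠ 0, and set s := −a² + b² + c². Let K be the 3×3 real matrix K = (2/n²)·[[2a² + b² + c² − Cn²/2, −3ab, −3ac], [3ab, −a² − 2b² + c² − Cn²/2, −3bc], [3ac, −3bc, −a² + b² − 2c² − Cn²/2]]. Then the characteristic polynomial of K factors as (X − μ)²·(X − ν), where μ = 2s/n² − C and ν = −4s/n² − C. In particular K has exactly one eigenvalue of (algebraic) multiplicity two and one simple eigenvalue whenever s ≠ 0. -/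
/-!
`K` is a rank-one perturbation of a scalar matrix: `K = μ • 1 + (6/n²) v wᵀ` with
`v = (a, b, c)` and `w = (a, -b, -c)`. The matrix `μ • 1 + u wᵀ` has `μ` as an eigenvalue of
multiplicity `dim - 1`, the remaining one being `μ + w ⬝ u`; here
`w ⬝ u = (6/n²)(a² - b² - c²) = -6s/n²`, so it is `ν`.
-/

open Polynomial

namespace Matrix

variable {n R : Type*} [Fintype n] [DecidableEq n] [CommRing R] [Nonempty n]

theorem charpoly_scalar_add_vecMulVec (μ : R) (u v : n → R) :
    (scalar n μ + vecMulVec u v).charpoly =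
      (X - C μ) ^ (Fintype.card n - 1) * (X - C (μ + u ⬝ᵥ v)) := by
  have hcard : Fintype.card n = Fintype.card n - 1 + 1 :=
    (Nat.succ_pred_eq_of_pos Fintype.card_pos).symm
  rw [add_comm, ← sub_neg_eq_add, ← map_neg, charpoly_sub_scalar, charpoly_vecMulVec, hcard]
  simp only [Nat.add_sub_cancel, sub_comp, pow_comp, smul_eq_C_mul, mul_comp, C_comp, X_comp,
    map_neg, map_add, ← sub_eq_add_neg]
  ring

end Matrix

/-- The characteristic polynomial of the matrix of the Jacobi operator (restricted to the
orthogonal complement of the unit direction, in the basis `(J₁X, J₂X, J₃X)`) factors as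
`(X − μ)² (X − ν)` with `μ = 2s/n² − C`, `ν = −4s/n² − C`, `s = −a² + b² + c²`; in
particular it has a double and a simple eigenvalue whenever `s ≠ 0`. -/
theorem jacobi_matrix_charpoly (n a b c C : ℝ) (hn : n ≠ 0) :
    let s : ℝ := -a ^ 2 + b ^ 2 + c ^ 2
    let K : Matrix (Fin 3) (Fin 3) ℝ :=
      (2 / n ^ 2) •
        !![2 * a ^ 2 + b ^ 2 + c ^ 2 - C * n ^ 2 / 2, -3 * a * b, -3 * a * c;
           3 * a * b, -a ^ 2 - 2 * b ^ 2 + c ^ 2 - C * n ^ 2 / 2, -3 * b * c;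
           3 * a * c, -3 * b * c, -a ^ 2 + b ^ 2 - 2 * c ^ 2 - C * n ^ 2 / 2]
    let μ : ℝ := 2 * s / n ^ 2 - C
    let ν : ℝ := -4 * s / n ^ 2 - C
    K.charpoly = (X - Polynomial.C μ) ^ 2 * (X - Polynomial.C ν) ∧ (s ≠ 0 → μ ≠ ν) := by
  intro s K μ ν
  have hK : K = Matrix.scalar (Fin 3) μ +
      Matrix.vecMulVec ((6 / n ^ 2) • ![a, b, c]) ![a, -b, -c] := by
    ext i j
    fin_cases i <;> fin_cases j <;> simp [K, μ, s] <;> field_simp <;> ring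
  have hν : μ + (6 / n ^ 2) • ![a, b, c] ⬝ᵥ ![a, -b, -c] = ν := by
    simp only [μ, ν, s, dotProduct, Fin.sum_univ_three, Pi.smul_apply, smul_eq_mul,
      Matrix.cons_val_zero, Matrix.cons_val_one, Matrix.cons_val]
    ring
  refine ⟨by rw [hK, Matrix.charpoly_scalar_add_vecMulVec, hν, Fintype.card_fin], fun hs h => hs ?_⟩
  have hgap : μ - ν = 6 * s / n ^ 2 := by ring
  rw [h, sub_self, eq_comm, div_eq_zero_iff] at hgap
  simpa [hn] using hgap
end

section
/- Let p ≠ q be coprime natural numbers with p, q ≥ 1. Then there exist triples u = (u₀,u₁,u₂) and u' = (u₀',u₁',u₂') in H̃³, each satisfying |u₀|² + |u₁|² + |u₂|² = 1 and q·ū₀ j u₀ + p·ū₁ j u₁ + p·ū₂ j u₂ = 0, such that q²|u₀|² + p²|u₁|² + p²|u₂|² = p² and q²|u₀'|² + p²|u₁'|² + p²|u₂'|² = p·q; in particular both values are nonzero and distinct, so the function n² = q²|u₀|² + p²|u₁|² + p²|u₂|² is a nonconstant function on K₀. -/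
/-!
Both points are built from para-quaternions of the form `x` and `y i`, for which
`ū j u` equals `x² j` and `-y² j` respectively, so the defining equation of `K₀` is a real
linear condition on the squares. Taking `u = (0, r, r i)` with `r² = 1/2` gives `n² = p²`;
taking `u' = (a, 0, b i)` with `a² = p/(p+q)`, `b² = q/(p+q)` gives `n² = pq`.
-/

open Quaternion

noncomputable section

lemma pnormSq_mk (x y z w : ℝ) : pnormSq ⟨x, y, z, w⟩ = x ^ 2 + y ^ 2 - z ^ 2 - w ^ 2 := by
  simp only [pnormSq, QuaternionAlgebra.re_mul, QuaternionAlgebra.re_star,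
    QuaternionAlgebra.imI_star, QuaternionAlgebra.imJ_star, QuaternionAlgebra.imK_star]
  ring

lemma pnormSq_coe (x : ℝ) : pnormSq x = x ^ 2 :=
  (pnormSq_mk x 0 0 0).trans (by ring)

lemma star_mul_jq_mul_coe (x : ℝ) :
    star (x : ℍ[ℝ, -1, 1]) * jq * x = ⟨0, 0, x ^ 2, 0⟩ := by
  ext <;> simp [jq, sq]

lemma star_mul_jq_mul_mk_imI (y : ℝ) :
    star (⟨0, y, 0, 0⟩ : ℍ[ℝ, -1, 1]) * jq * ⟨0, y, 0, 0⟩ = ⟨0, 0, -y ^ 2, 0⟩ := by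
  ext <;> simp [jq, sq]

def InK0 (p q : ℕ) (u₀ u₁ u₂ : ℍ[ℝ, -1, 1]) : Prop :=
  pnormSq u₀ + pnormSq u₁ + pnormSq u₂ = 1 ∧
    (q : ℍ[ℝ, -1, 1]) * (star u₀ * jq * u₀) + (p : ℍ[ℝ, -1, 1]) * (star u₁ * jq * u₁)
      + (p : ℍ[ℝ, -1, 1]) * (star u₂ * jq * u₂) = 0

def nSq (p q : ℕ) (u₀ u₁ u₂ : ℍ[ℝ, -1, 1]) : ℝ :=
  (q : ℝ) ^ 2 * pnormSq u₀ + (p : ℝ) ^ 2 * pnormSq u₁ + (p : ℝ) ^ 2 * pnormSq u₂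

lemma inK0_coe_coe_mk_imI_iff {p q : ℕ} {x₀ x₁ y : ℝ} :
    InK0 p q x₀ x₁ ⟨0, y, 0, 0⟩ ↔
      x₀ ^ 2 + x₁ ^ 2 + y ^ 2 = 1 ∧ q * x₀ ^ 2 + p * x₁ ^ 2 - p * y ^ 2 = 0 := by
  rw [InK0, pnormSq_coe, pnormSq_coe, pnormSq_mk, star_mul_jq_mul_coe, star_mul_jq_mul_coe,
    star_mul_jq_mul_mk_imI, QuaternionAlgebra.ext_iff]
  simp [sub_eq_add_neg]

lemma nSq_coe_coe_mk_imI {p q : ℕ} {x₀ x₁ y : ℝ} :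
    nSq p q x₀ x₁ ⟨0, y, 0, 0⟩ = q ^ 2 * x₀ ^ 2 + p ^ 2 * x₁ ^ 2 + p ^ 2 * y ^ 2 := by
  rw [nSq, pnormSq_coe, pnormSq_coe, pnormSq_mk]
  ring

lemma exists_inK0_nSq_eq_sq (p q : ℕ) :
    ∃ u₀ u₁ u₂, InK0 p q u₀ u₁ u₂ ∧ nSq p q u₀ u₁ u₂ = (p : ℝ) ^ 2 := by
  obtain ⟨r, hr⟩ : ∃ r : ℝ, r ^ 2 = 1 / 2 := ⟨√(1 / 2), Real.sq_sqrt (by norm_num)⟩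
  refine ⟨(0 : ℝ), r, ⟨0, r, 0, 0⟩, inK0_coe_coe_mk_imI_iff.mpr ⟨?_, by ring⟩,
    nSq_coe_coe_mk_imI.trans ?_⟩
  · linear_combination 2 * hr
  · linear_combination 2 * (p : ℝ) ^ 2 * hr

lemma exists_inK0_nSq_eq_mul (p q : ℕ) (hpq : 0 < p + q) :
    ∃ u₀ u₁ u₂, InK0 p q u₀ u₁ u₂ ∧ nSq p q u₀ u₁ u₂ = (p : ℝ) * q := by
  have hsum : (0 : ℝ) < p + q := by exact_mod_cast hpq
  obtain ⟨a, ha⟩ : ∃ a : ℝ, a ^ 2 = p / (p + q) := ⟨√_, Real.sq_sqrt (by positivity)⟩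
  obtain ⟨b, hb⟩ : ∃ b : ℝ, b ^ 2 = q / (p + q) := ⟨√_, Real.sq_sqrt (by positivity)⟩
  refine ⟨a, (0 : ℝ), ⟨0, b, 0, 0⟩, inK0_coe_coe_mk_imI_iff.mpr ⟨?_, ?_⟩,
    nSq_coe_coe_mk_imI.trans ?_⟩
  all_goals
    rw [ha, hb]
    field_simp
    ring

theorem nSq_nonconstant_on_K0_general (p q : ℕ) (hne : p ≠ q)
    (hp : 1 ≤ p) (hq : 1 ≤ q) :
    ∃ u₀ u₁ u₂ u₀' u₁' u₂' : ℍ[ℝ, -1, 1],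
      (pnormSq u₀ + pnormSq u₁ + pnormSq u₂ = 1) ∧
      ((q : ℍ[ℝ, -1, 1]) * (star u₀ * jq * u₀) + (p : ℍ[ℝ, -1, 1]) * (star u₁ * jq * u₁)
          + (p : ℍ[ℝ, -1, 1]) * (star u₂ * jq * u₂) = 0) ∧
      (pnormSq u₀' + pnormSq u₁' + pnormSq u₂' = 1) ∧
      ((q : ℍ[ℝ, -1, 1]) * (star u₀' * jq * u₀') + (p : ℍ[ℝ, -1, 1]) * (star u₁' * jq * u₁')
          + (p : ℍ[ℝ, -1, 1]) * (star u₂' * jq * u₂') = 0) ∧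
      ((q : ℝ) ^ 2 * pnormSq u₀ + (p : ℝ) ^ 2 * pnormSq u₁ + (p : ℝ) ^ 2 * pnormSq u₂
          = (p : ℝ) ^ 2) ∧
      ((q : ℝ) ^ 2 * pnormSq u₀' + (p : ℝ) ^ 2 * pnormSq u₁' + (p : ℝ) ^ 2 * pnormSq u₂'
          = (p : ℝ) * q) ∧
      ((p : ℝ) ^ 2 ≠ 0 ∧ (p : ℝ) * q ≠ 0 ∧ (p : ℝ) ^ 2 ≠ (p : ℝ) * q) := by
  have hp' : (p : ℝ) ≠ 0 := by positivity
  obtain ⟨u₀, u₁, u₂, ⟨hsph, hjeq⟩, hn⟩ := exists_inK0_nSq_eq_sq p q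
  obtain ⟨u₀', u₁', u₂', ⟨hsph', hjeq'⟩, hn'⟩ := exists_inK0_nSq_eq_mul p q (by omega)
  refine ⟨u₀, u₁, u₂, u₀', u₁', u₂', hsph, hjeq, hsph', hjeq', hn, hn', by positivity,
    by positivity, ?_⟩
  rw [sq]
  exact (mul_right_injective₀ hp').ne (by exact_mod_cast hne)

/-- Non-constancy of `n² = q²|u₀|² + p²|u₁|² + p²|u₂|²` along `K₀`: there are two points
of `K₀` (triples on the pseudo-sphere satisfying the defining equation) at which `n²` takes
the distinct nonzero values `p²` and `pq`. -/
theorem nSq_nonconstant_on_K0 (p q : ℕ) (hpq : Nat.Coprime p q) (hne : p ≠ q)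
    (hp : 1 ≤ p) (hq : 1 ≤ q) :
    ∃ u₀ u₁ u₂ u₀' u₁' u₂' : ℍ[ℝ, -1, 1],
      (pnormSq u₀ + pnormSq u₁ + pnormSq u₂ = 1) ∧
      ((q : ℍ[ℝ, -1, 1]) * (star u₀ * jq * u₀) + (p : ℍ[ℝ, -1, 1]) * (star u₁ * jq * u₁)
          + (p : ℍ[ℝ, -1, 1]) * (star u₂ * jq * u₂) = 0) ∧
      (pnormSq u₀' + pnormSq u₁' + pnormSq u₂' = 1) ∧
      ((q : ℍ[ℝ, -1, 1]) * (star u₀' * jq * u₀') + (p : ℍ[ℝ, -1, 1]) * (star u₁' * jq * u₁')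
          + (p : ℍ[ℝ, -1, 1]) * (star u₂' * jq * u₂') = 0) ∧
      ((q : ℝ) ^ 2 * pnormSq u₀ + (p : ℝ) ^ 2 * pnormSq u₁ + (p : ℝ) ^ 2 * pnormSq u₂
          = (p : ℝ) ^ 2) ∧
      ((q : ℝ) ^ 2 * pnormSq u₀' + (p : ℝ) ^ 2 * pnormSq u₁' + (p : ℝ) ^ 2 * pnormSq u₂'
          = (p : ℝ) * q) ∧
      ((p : ℝ) ^ 2 ≠ 0 ∧ (p : ℝ) * q ≠ 0 ∧ (p : ℝ) ^ 2 ≠ (p : ℝ) * q) :=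
  nSq_nonconstant_on_K0_general p q hne hp hq
end
end

section
/- Let p, q be positive real numbers satisfying p² < √2·q² and √2·q² < 2√2·p² (equivalently p² < √2 q² and q² < 2p²). Then for every real m with min(p²,q²) ≤ m ≤ max(p²,q²), one has 4 − 2p⁴q²/m³ > 0 (and also 4 + 4p⁴q²/m³ > 0). Consequently all sectional curvatures of the orbifold O_{p,q}(1), which lie in the interval [4 − 2p⁴q²/m³, 4 + 4p⁴q²/m³], are positive. -/
/-!
Write `a = p²`, `b = q²`. The hypotheses say exactly `a² < 2b²` and `b < 2a`, and the curvature
bound `4 − 2a²b/m³` is positive iff `a²b < 2m³`. Since `m ≥ min(a, b)`, this holds because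
`a²b < 2b³` (from `a² < 2b²`) when `b ≤ a`, and `a²b < 2a³` (from `b < 2a`) when `a ≤ b`.
-/

open Real

lemma sq_lt_two_mul_sq_of_lt_sqrt_two_mul {a b : ℝ} (ha : 0 ≤ a) (h : a < √2 * b) :
    a ^ 2 < 2 * b ^ 2 := by
  calc a ^ 2 < (√2 * b) ^ 2 := pow_lt_pow_left₀ h ha two_ne_zero
    _ = 2 * b ^ 2 := by rw [mul_pow, sq_sqrt zero_le_two]

lemma lt_two_mul_of_sqrt_two_mul_lt {a b : ℝ} (h : √2 * b < 2 * √2 * a) : b < 2 * a := by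
  rw [mul_comm 2, mul_assoc] at h
  exact lt_of_mul_lt_mul_left h (sqrt_nonneg 2)

lemma sq_mul_lt_two_mul_pow_three_of_min_le {a b m : ℝ} (ha : 0 < a) (hb : 0 < b)
    (hab : a ^ 2 < 2 * b ^ 2) (hba : b < 2 * a) (hm : min a b ≤ m) :
    a ^ 2 * b < 2 * m ^ 3 := by
  rcases le_total a b with hle | hle
  · have ham : a ≤ m := min_eq_left hle ▸ hm
    calc a ^ 2 * b < a ^ 2 * (2 * a) := mul_lt_mul_of_pos_left hba (by positivity)
      _ = 2 * a ^ 3 := by ring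
      _ ≤ 2 * m ^ 3 := by gcongr
  · have hbm : b ≤ m := min_eq_right hle ▸ hm
    calc a ^ 2 * b < 2 * b ^ 2 * b := mul_lt_mul_of_pos_right hab hb
      _ = 2 * b ^ 3 := by ring
      _ ≤ 2 * m ^ 3 := by gcongr

lemma sub_two_mul_div_pow_three_pos {k m : ℝ} (hm : 0 < m) (hk : k < 2 * m ^ 3) :
    0 < 4 - 2 * k / m ^ 3 := by
  have : 2 * k / m ^ 3 < 4 := by
    rw [div_lt_iff₀ (by positivity)]
    linarith
  linarith

theorem positive_sectional_curvature_general (p q : ℝ)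
    (h₁ : p ^ 2 < Real.sqrt 2 * q ^ 2) (h₂ : Real.sqrt 2 * q ^ 2 < 2 * Real.sqrt 2 * p ^ 2) :
    ∀ m : ℝ, min (p ^ 2) (q ^ 2) ≤ m → m ≤ max (p ^ 2) (q ^ 2) →
      0 < 4 - 2 * p ^ 4 * q ^ 2 / m ^ 3 ∧ 0 < 4 + 4 * p ^ 4 * q ^ 2 / m ^ 3 := by
  intro m hm _
  have hpq : (p ^ 2) ^ 2 < 2 * (q ^ 2) ^ 2 :=
    sq_lt_two_mul_sq_of_lt_sqrt_two_mul (by positivity) h₁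
  have hqp : q ^ 2 < 2 * p ^ 2 := lt_two_mul_of_sqrt_two_mul_lt h₂
  have hq : 0 < q ^ 2 := pos_of_mul_pos_right ((sq_nonneg p).trans_lt h₁) (sqrt_nonneg 2)
  have hp : 0 < p ^ 2 := by linarith
  have hm0 : 0 < m := (lt_min hp hq).trans_le hm
  have hkey : p ^ 4 * q ^ 2 < 2 * m ^ 3 := by
    simpa only [← pow_mul] using sq_mul_lt_two_mul_pow_three_of_min_le hp hq hpq hqp hm
  refine ⟨?_, by positivity⟩
  simpa only [mul_assoc] using sub_two_mul_div_pow_three_pos hm0 hkey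

/-- Positivity of the sectional curvature of `O_{p,q}(1)` (Theorem 6.3): if
`p² < √2·q²` and `√2·q² < 2√2·p²`, then for every `m` with
`min(p², q²) ≤ m ≤ max(p², q²)` both curvature bounds `4 − 2p⁴q²/m³` and
`4 + 4p⁴q²/m³` are positive. -/
theorem positive_sectional_curvature (p q : ℝ) (hp : 0 < p) (hq : 0 < q)
    (h₁ : p ^ 2 < Real.sqrt 2 * q ^ 2) (h₂ : Real.sqrt 2 * q ^ 2 < 2 * Real.sqrt 2 * p ^ 2) :
    ∀ m : ℝ, min (p ^ 2) (q ^ 2) ≤ m → m ≤ max (p ^ 2) (q ^ 2) →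
      0 < 4 - 2 * p ^ 4 * q ^ 2 / m ^ 3 ∧ 0 < 4 + 4 * p ^ 4 * q ^ 2 / m ^ 3 :=
  positive_sectional_curvature_general p q h₁ h₂
end

section
/- Let p, q be positive real numbers with p ≤ q and p² < √2·q² < 2√2·p². For real m with p² ≤ m ≤ q² define k(m) := (4 − 2p⁴q²/m³)/(4 + 4p⁴q²/m³). Then for every such m: 1/4 − (3/4)·(q² − p²)/(p² + q²) ≤ k(m) ≤ 1/4 + (3/4)·(q⁴ − p⁴)/(p⁴ + q⁴). -/
/-!
Writing `s = p⁴q²/m³`, the pinching constant is `(4 - 2s)/(4 + 4s)`, which decreases in `s` and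
hence increases in `m`. Its extreme values on `[p², q²]` are therefore attained at the endpoints,
where `s = q²/p²` and `s = p⁴/q⁴` give exactly the two bounds.
-/

open Set

noncomputable def pinchingRatio (s : ℝ) : ℝ := (4 - 2 * s) / (4 + 4 * s)

theorem antitoneOn_pinchingRatio : AntitoneOn pinchingRatio (Ioi (-1)) := by
  intro a ha b hb hab
  simp only [mem_Ioi] at ha hb
  rw [pinchingRatio, pinchingRatio, div_le_div_iff₀ (by linarith) (by linarith)]
  nlinarith

theorem monotoneOn_pinchingRatio_div_pow_three {c : ℝ} (hc : 0 ≤ c) :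
    MonotoneOn (fun m ↦ pinchingRatio (c / m ^ 3)) (Ioi 0) := by
  intro a (ha : 0 < a) b (hb : 0 < b) hab
  have hca : 0 ≤ c / a ^ 3 := by positivity
  have hcb : 0 ≤ c / b ^ 3 := by positivity
  refine antitoneOn_pinchingRatio (mem_Ioi.2 (by linarith)) (mem_Ioi.2 (by linarith)) ?_
  exact div_le_div_of_nonneg_left hc (pow_pos ha 3) (pow_le_pow_left₀ ha.le hab 3)

theorem pinchingRatio_div {x y : ℝ} (hx : x ≠ 0) (hxy : x + y ≠ 0) :
    pinchingRatio (y / x) = 1 / 4 - 3 / 4 * ((y - x) / (x + y)) := by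
  have hden : 4 + 4 * (y / x) = 4 * (x + y) / x := by field_simp
  rw [pinchingRatio, hden]
  field_simp
  ring

theorem pinching_bounds_p_le_q_general (p q : ℝ) (hp : 0 < p) (hq : 0 < q) :
    ∀ m : ℝ, p ^ 2 ≤ m → m ≤ q ^ 2 →
      1 / 4 - 3 / 4 * ((q ^ 2 - p ^ 2) / (p ^ 2 + q ^ 2))
          ≤ (4 - 2 * p ^ 4 * q ^ 2 / m ^ 3) / (4 + 4 * p ^ 4 * q ^ 2 / m ^ 3) ∧
      (4 - 2 * p ^ 4 * q ^ 2 / m ^ 3) / (4 + 4 * p ^ 4 * q ^ 2 / m ^ 3)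
          ≤ 1 / 4 + 3 / 4 * ((q ^ 4 - p ^ 4) / (p ^ 4 + q ^ 4)) := by
  intro m hm₁ hm₂
  have hm : 0 < m := (pow_pos hp 2).trans_le hm₁
  have hk : (4 - 2 * p ^ 4 * q ^ 2 / m ^ 3) / (4 + 4 * p ^ 4 * q ^ 2 / m ^ 3)
      = pinchingRatio (p ^ 4 * q ^ 2 / m ^ 3) := by
    rw [pinchingRatio]; ring
  have hmono := monotoneOn_pinchingRatio_div_pow_three (c := p ^ 4 * q ^ 2) (by positivity)
  rw [hk]
  constructor
  · calc _ = pinchingRatio (q ^ 2 / p ^ 2) :=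
          (pinchingRatio_div (by positivity) (by positivity)).symm
      _ = pinchingRatio (p ^ 4 * q ^ 2 / (p ^ 2) ^ 3) := by congr 1; field_simp
      _ ≤ _ := hmono (pow_pos hp 2) hm hm₁
  · calc _ ≤ pinchingRatio (p ^ 4 * q ^ 2 / (q ^ 2) ^ 3) := hmono hm (pow_pos hq 2) hm₂
      _ = pinchingRatio (p ^ 4 / q ^ 4) := by congr 1; field_simp
      _ = _ := by rw [pinchingRatio_div (by positivity) (by positivity)]; ring

/-- Pinching bounds for `O_{p,q}(1)` in the case `p ≤ q` (Lemma 6.4): with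
`k(m) = (4 − 2p⁴q²/m³)/(4 + 4p⁴q²/m³)` and `p² ≤ m ≤ q²`,
`1/4 − (3/4)(q² − p²)/(p² + q²) ≤ k(m) ≤ 1/4 + (3/4)(q⁴ − p⁴)/(p⁴ + q⁴)`. -/
theorem pinching_bounds_p_le_q (p q : ℝ) (hp : 0 < p) (hq : 0 < q) (hpq : p ≤ q)
    (h₁ : p ^ 2 < Real.sqrt 2 * q ^ 2) (h₂ : Real.sqrt 2 * q ^ 2 < 2 * Real.sqrt 2 * p ^ 2) :
    ∀ m : ℝ, p ^ 2 ≤ m → m ≤ q ^ 2 →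
      1 / 4 - 3 / 4 * ((q ^ 2 - p ^ 2) / (p ^ 2 + q ^ 2))
          ≤ (4 - 2 * p ^ 4 * q ^ 2 / m ^ 3) / (4 + 4 * p ^ 4 * q ^ 2 / m ^ 3) ∧
      (4 - 2 * p ^ 4 * q ^ 2 / m ^ 3) / (4 + 4 * p ^ 4 * q ^ 2 / m ^ 3)
          ≤ 1 / 4 + 3 / 4 * ((q ^ 4 - p ^ 4) / (p ^ 4 + q ^ 4)) :=
  pinching_bounds_p_le_q_general p q hp hq
end

section
/- Let p, q be coprime natural numbers with p, q ≥ 1, and for real m with min(p²,q²) ≤ m ≤ max(p²,q²) define k(m) := (4 − 2p⁴q²/m³)/(4 + 4p⁴q²/m³). Then k(m) = 1/4 for all such m if and only if p = q = 1. -/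
/-!
Put `t = p⁴q²/m³ ≥ 0`; then `k(m) = (4 - 2t)/(4 + 4t)`, which equals `1/4` exactly when `t = 1`.
At the endpoint `m = p²` this says `q² = p²`, so `p = q`, and coprimality forces `p = q = 1`.
Conversely, for `p = q = 1` the interval collapses to `m = 1`, where `t = 1`.
-/

noncomputable def pinchingConstant (a b m : ℝ) : ℝ :=
  (4 - 2 * a ^ 4 * b ^ 2 / m ^ 3) / (4 + 4 * a ^ 4 * b ^ 2 / m ^ 3)

lemma div_eq_quarter_iff_eq_one {t : ℝ} (ht : 0 ≤ t) :
    (4 - 2 * t) / (4 + 4 * t) = 1 / 4 ↔ t = 1 := by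
  rw [div_eq_div_iff (by positivity) four_ne_zero]
  constructor <;> intro h <;> linarith

lemma pinchingConstant_eq_quarter_iff {a b m : ℝ} (hm : 0 ≤ m) :
    pinchingConstant a b m = 1 / 4 ↔ a ^ 4 * b ^ 2 / m ^ 3 = 1 := by
  have hassoc (c : ℝ) : c * a ^ 4 * b ^ 2 / m ^ 3 = c * (a ^ 4 * b ^ 2 / m ^ 3) := by ring
  rw [pinchingConstant, hassoc, hassoc]
  exact div_eq_quarter_iff_eq_one (by positivity)

lemma pow_four_mul_sq_div_sq_pow_three_eq_one_iff {a b : ℝ} (ha : 0 ≤ a) (hb : 0 ≤ b) :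
    a ^ 4 * b ^ 2 / (a ^ 2) ^ 3 = 1 ↔ a ≠ 0 ∧ a = b := by
  rcases eq_or_ne a 0 with rfl | ha0
  · simp
  have hsimp : a ^ 4 * b ^ 2 / (a ^ 2) ^ 3 = b ^ 2 / a ^ 2 := by field_simp
  rw [hsimp, div_eq_one_iff_eq (by positivity), sq_eq_sq₀ hb ha, eq_comm]
  exact (and_iff_right ha0).symm

theorem pinching_quarter_iff_p_eq_q_eq_one_general (p q : ℕ) (hpq : Nat.Coprime p q) :
    (∀ m : ℝ, min ((p : ℝ) ^ 2) ((q : ℝ) ^ 2) ≤ m → m ≤ max ((p : ℝ) ^ 2) ((q : ℝ) ^ 2) →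
        (4 - 2 * (p : ℝ) ^ 4 * (q : ℝ) ^ 2 / m ^ 3) /
            (4 + 4 * (p : ℝ) ^ 4 * (q : ℝ) ^ 2 / m ^ 3) = 1 / 4) ↔
      p = 1 ∧ q = 1 := by
  constructor
  · intro h
    have hk : pinchingConstant p q ((p : ℝ) ^ 2) = 1 / 4 :=
      h _ (min_le_left _ _) (le_max_left _ _)
    obtain ⟨-, hpq_real⟩ := (pow_four_mul_sq_div_sq_pow_three_eq_one_iff (Nat.cast_nonneg p)
      (Nat.cast_nonneg q)).1 ((pinchingConstant_eq_quarter_iff (by positivity)).1 hk)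
    obtain rfl : p = q := by exact_mod_cast hpq_real
    have hp : p = 1 := (Nat.coprime_self p).1 hpq
    exact ⟨hp, hp⟩
  · rintro ⟨rfl, rfl⟩ m hm_ge hm_le
    obtain rfl : m = 1 := le_antisymm (by simpa using hm_le) (by simpa using hm_ge)
    norm_num

/-- The pinching constant `k(m) = (4 − 2p⁴q²/m³)/(4 + 4p⁴q²/m³)` equals `1/4` for all
`m` with `min(p², q²) ≤ m ≤ max(p², q²)` if and only if `p = q = 1` (final assertion of
Lemma 6.4). -/
theorem pinching_quarter_iff_p_eq_q_eq_one (p q : ℕ) (hpq : Nat.Coprime p q)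
    (hp : 1 ≤ p) (hq : 1 ≤ q) :
    (∀ m : ℝ, min ((p : ℝ) ^ 2) ((q : ℝ) ^ 2) ≤ m → m ≤ max ((p : ℝ) ^ 2) ((q : ℝ) ^ 2) →
        (4 - 2 * (p : ℝ) ^ 4 * (q : ℝ) ^ 2 / m ^ 3) /
            (4 + 4 * (p : ℝ) ^ 4 * (q : ℝ) ^ 2 / m ^ 3) = 1 / 4) ↔
      p = 1 ∧ q = 1 :=
  pinching_quarter_iff_p_eq_q_eq_one_general p q hpq
end
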